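/- arXiv:2201.09825 — 2 statements merged into one kernel-verified Lean document; each statement's English description precedes it below -/
import Mathlib

section
/- In the category of supported sets, a monomorphism is regular (an equalizer) if and only if it is support-reflecting; moreover, the supported map t: 1 → 2 sending 0 to 1 (where 1 and 2 carry empty supports) is a regular-subobject classifier: for every support-reflecting monomorphism m: S → X there is a unique supported map χ: X → 2 making the square with m, the unique map S → 1, and t a pullback. -/
open CategoryTheory

/-- A supported set over `A`: a set with a finite support for each element. -/
structure SuppSet (A : Type) : Type 1 where
  carrier : Type
  supp : carrier → Set A
  finite : ∀ x, (supp x).Finite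

variable {A : Type}

instance : Category (SuppSet A) where
  Hom X Y := {f : X.carrier → Y.carrier // ∀ x, Y.supp (f x) ⊆ X.supp x}
  id _ := ⟨fun x => x, fun _ => subset_rfl⟩
  comp f g := ⟨fun x => g.1 (f.1 x), fun x => (g.2 _).trans (f.2 x)⟩
  id_comp _ := Subtype.ext rfl
  comp_id _ := Subtype.ext rfl
  assoc _ _ _ := Subtype.ext rfl

/-- The forgetful functor from supported sets to sets. -/
def Forget (A : Type) : SuppSet A ⥤ Type where
  obj X := X.carrier
  map f := TypeCat.ofHom f.1
  map_id _ := rfl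
  map_comp _ _ := rfl

/-- The terminal supported set `1 = {0}` with empty support. -/
def oneObj (A : Type) : SuppSet A where
  carrier := PUnit
  supp := fun _ => ∅
  finite := fun _ => Set.finite_empty

/-- The supported set `2 = {0,1}` with empty supports. -/
def twoObj (A : Type) : SuppSet A where
  carrier := Bool
  supp := fun _ => ∅
  finite := fun _ => Set.finite_empty

/-- The truth map `t : 1 → 2`. -/
def tMap (A : Type) : oneObj A ⟶ twoObj A := ⟨fun _ => true, fun _ => subset_rfl⟩

/-- The unique map to `1`. -/
def bangMap (S : SuppSet A) : S ⟶ oneObj A := ⟨fun _ => PUnit.unit, fun _ => Set.empty_subset _⟩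

/-!
A monomorphism of supported sets is injective, as one sees by testing it against one-point
objects. The characteristic map of `m : S ⟶ X` is the indicator of its image. A cone over
`t` and `χ` is a map into `X` landing in the image of `m`; the set-theoretic factorization
through `m` is supported exactly when `m` reflects supports, so then the square is a pullback,
and `m`, as a pullback of the split mono `t`, is regular. Conversely, if `m` is regular, the
point `m s`, carrying the support of `m s`, equalizes the pair defining `m` and so lifts to `s`,
whence `supp s ⊆ supp (m s)`.
-/

open Limits

namespace SuppSet

variable {S X Y W : SuppSet A}

lemma hom_ext {f g : X ⟶ Y} (h : ∀ x, f.1 x = g.1 x) : f = g :=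
  Subtype.ext (funext h)

lemma congr_hom {f g : X ⟶ Y} (h : f = g) (x : X.carrier) : f.1 x = g.1 x :=
  congrFun (congrArg Subtype.val h) x

instance : Subsingleton (X ⟶ oneObj A) :=
  ⟨fun _ _ => hom_ext fun _ => rfl⟩

def point (U : Set A) (hU : U.Finite) : SuppSet A where
  carrier := PUnit
  supp := fun _ => U
  finite := fun _ => hU

def pointAt (x : X.carrier) : point (X.supp x) (X.finite x) ⟶ X :=
  ⟨fun _ => x, fun _ => subset_rfl⟩

lemma injective_of_mono (m : S ⟶ X) [Mono m] : Function.Injective m.1 := by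
  intro s₁ s₂ h
  let P := point (S.supp s₁ ∪ S.supp s₂) ((S.finite s₁).union (S.finite s₂))
  let f₁ : P ⟶ S := ⟨fun _ => s₁, fun _ => Set.subset_union_left⟩
  let f₂ : P ⟶ S := ⟨fun _ => s₂, fun _ => Set.subset_union_right⟩
  exact congr_hom ((cancel_mono m).1 (hom_ext fun _ => h : f₁ ≫ m = f₂ ≫ m)) PUnit.unit

def IsSuppReflecting (m : S ⟶ X) : Prop :=
  ∀ s, X.supp (m.1 s) = S.supp s

lemma exists_lift_of_isSuppReflecting {m : S ⟶ X} (hm : IsSuppReflecting m) (f : W ⟶ X)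
    (hf : ∀ w, f.1 w ∈ Set.range m.1) : ∃ l : W ⟶ S, l ≫ m = f := by
  choose g hg using hf
  refine ⟨⟨g, fun w => ?_⟩, hom_ext hg⟩
  calc S.supp (g w) = X.supp (f.1 w) := by rw [← hm, hg]
    _ ⊆ W.supp w := f.2 w

open Classical in
noncomputable def charMap (m : S ⟶ X) : X ⟶ twoObj A :=
  ⟨fun x => decide (x ∈ Set.range m.1), fun _ => Set.empty_subset _⟩

open Classical in
lemma charMap_apply_eq_true_iff (m : S ⟶ X) (x : X.carrier) :
    (charMap m).1 x = true ↔ x ∈ Set.range m.1 :=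
  decide_eq_true_iff

lemma charMap_comm (m : S ⟶ X) : bangMap S ≫ tMap A = m ≫ charMap m :=
  hom_ext fun s => ((charMap_apply_eq_true_iff m _).2 ⟨s, rfl⟩).symm

lemma isPullback_charMap {m : S ⟶ X} [Mono m] (hm : IsSuppReflecting m) :
    IsPullback (bangMap S) m (tMap A) (charMap m) := by
  have lift (c : PullbackCone (tMap A) (charMap m)) : ∃ l : c.pt ⟶ S, l ≫ m = c.snd :=
    exists_lift_of_isSuppReflecting hm c.snd fun w =>
      (charMap_apply_eq_true_iff m _).1 (congr_hom c.condition w).symm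
  choose l hl using lift
  exact .of_isLimit' ⟨charMap_comm m⟩ <| PullbackCone.IsLimit.mk _ l
    (fun _ => Subsingleton.elim _ _) hl fun c _ _ h => (cancel_mono m).1 (h.trans (hl c).symm)

lemma charMap_eq_of_isPullback {m : S ⟶ X} {χ : X ⟶ twoObj A}
    (h : IsPullback (bangMap S) m (tMap A) χ) : χ = charMap m := by
  refine hom_ext fun x => Bool.eq_iff_iff.2 (Iff.trans ?_ (charMap_apply_eq_true_iff m x).symm)
  constructor
  · intro hx
    have hsq : bangMap _ ≫ tMap A = pointAt x ≫ χ := hom_ext fun _ => hx.symm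
    exact ⟨(h.lift _ _ hsq).1 PUnit.unit, congr_hom (h.lift_snd _ _ hsq) PUnit.unit⟩
  · rintro ⟨s, rfl⟩
    exact (congr_hom h.w s).symm

instance : IsSplitMono (tMap A) :=
  .mk' ⟨bangMap _, Subsingleton.elim _ _⟩

lemma nonempty_regularMono_of_isSuppReflecting {m : S ⟶ X} [Mono m] (hm : IsSuppReflecting m) :
    Nonempty (RegularMono m) :=
  ⟨regularOfIsPullbackSndOfRegular (.ofIsSplitMono (tMap A)) (isPullback_charMap hm).w
    (isPullback_charMap hm).isLimit⟩

lemma isSuppReflecting_of_regularMono {m : S ⟶ X} (hm : RegularMono m) : IsSuppReflecting m := by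
  have : Mono m := hm.mono
  intro s
  refine (m.2 s).antisymm ?_
  obtain ⟨k, hk⟩ := hm.lift' (pointAt (m.1 s)) (hom_ext fun _ => congr_hom hm.w s)
  have hks : k.1 PUnit.unit = s := injective_of_mono m (congr_hom hk PUnit.unit)
  have hk_supp := k.2 PUnit.unit
  rwa [hks] at hk_supp

end SuppSet

/-- In `Supp(A)` a monomorphism is regular (an equalizer) iff it is
support-reflecting, and `t : 1 → 2` is a regular-subobject classifier: every
support-reflecting monomorphism `m : S → X` has a unique characteristic map
`χ : X → 2` making the square a pullback. -/
theorem suppSet_regularMono_iff_and_classifier (A : Type) :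
    (∀ (S X : SuppSet A) (m : S ⟶ X), Mono m →
      (Nonempty (RegularMono m) ↔ ∀ s, X.supp (m.1 s) = S.supp s)) ∧
    (∀ (S X : SuppSet A) (m : S ⟶ X), Mono m →
      (∀ s, X.supp (m.1 s) = S.supp s) →
      ∃! χ : X ⟶ twoObj A, IsPullback (bangMap S) m (tMap A) χ) :=
  ⟨fun _ _ _ _ => ⟨fun ⟨hm⟩ => SuppSet.isSuppReflecting_of_regularMono hm,
      SuppSet.nonempty_regularMono_of_isSuppReflecting⟩,
    fun _ _ m _ hm => ⟨SuppSet.charMap m, SuppSet.isPullback_charMap hm,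
      fun _ => SuppSet.charMap_eq_of_isPullback⟩⟩
end

section
/- The category of supported sets over A is locally finitely presentable, and a supported set is a finitely presentable object if and only if its underlying set is finite. -/
open CategoryTheory

variable {A : Type}

open Limits

/-- A supported set is finitely presentable if its hom-functor preserves
directed (filtered) colimits. -/
def FinitelyPresentable (X : SuppSet A) : Prop :=
  ∀ (J : Type) (_ : SmallCategory J), IsFiltered J →
    Nonempty (PreservesColimitsOfShape J (coyoneda.obj (Opposite.op X)))

/-!
Colimits of supported sets are computed on carriers, the support of a class being the
intersection of the supports of its representatives. In a filtered colimit this intersection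
is attained by a single representative. Hence a map from a finite supported set into a filtered
colimit lifts, support-decreasingly, to one stage, while two such lifts are already identified
at some stage by finiteness in `Type`. Conversely every supported set is the directed union of
its finite parts, and the identity of a finitely presentable one factors through one of them.
-/

namespace SuppSet

section Colimits

variable {J : Type} [SmallCategory J] (F : J ⥤ SuppSet A)

def colimitSupp (q : colimit (F ⋙ Forget A)) : Set A :=
  ⋂ (j) (y : (F.obj j).carrier) (_ : colimit.ι (F ⋙ Forget A) j y = q), (F.obj j).supp y

lemma colimitSupp_ι_subset (j : J) (y : (F.obj j).carrier) :
    colimitSupp F (colimit.ι (F ⋙ Forget A) j y) ⊆ (F.obj j).supp y :=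
  Set.iInter_subset_of_subset j (Set.iInter_subset_of_subset y (Set.iInter_subset _ rfl))

lemma colimitSupp_finite (q : colimit (F ⋙ Forget A)) : (colimitSupp F q).Finite := by
  obtain ⟨j, y, rfl⟩ := Types.jointly_surjective' q
  exact ((F.obj j).finite y).subset (colimitSupp_ι_subset F j y)

lemma ι_map_apply {i j : J} (f : i ⟶ j) (y : (F.obj i).carrier) :
    colimit.ι (F ⋙ Forget A) j ((F.map f).1 y) = colimit.ι (F ⋙ Forget A) i y :=
  ConcreteCategory.congr_hom (colimit.w (F ⋙ Forget A) f) y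

noncomputable def colimitCocone : Cocone F where
  pt := ⟨colimit (F ⋙ Forget A), colimitSupp F, colimitSupp_finite F⟩
  ι.app j := ⟨colimit.ι (F ⋙ Forget A) j, colimitSupp_ι_subset F j⟩
  ι.naturality _ _ f := Subtype.ext (funext (ι_map_apply F f))

lemma ι_desc_apply (c : Cocone F) (j : J) (y : (F.obj j).carrier) :
    colimit.desc (F ⋙ Forget A) ((Forget A).mapCocone c) (colimit.ι (F ⋙ Forget A) j y) =
      (c.ι.app j).1 y :=
  ConcreteCategory.congr_hom (colimit.ι_desc ((Forget A).mapCocone c) j) y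

noncomputable def isColimitColimitCocone : IsColimit (colimitCocone F) where
  desc c := ⟨colimit.desc (F ⋙ Forget A) ((Forget A).mapCocone c), by
    rintro q a ha _ ⟨j, rfl⟩ _ ⟨y, rfl⟩ _ ⟨rfl, rfl⟩
    rw [ι_desc_apply] at ha
    exact (c.ι.app j).2 y ha⟩
  fac c j := Subtype.ext (funext (ι_desc_apply F c j))
  uniq c m hm := by
    refine Subtype.ext (funext fun q => ?_)
    obtain ⟨j, y, rfl⟩ := Types.jointly_surjective' q
    exact (congrFun (congrArg Subtype.val (hm j)) y).trans (ι_desc_apply F c j y).symm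

instance : HasColimits (SuppSet A) where
  has_colimits_of_shape _ _ :=
    { has_colimit := fun F => ⟨⟨⟨_, isColimitColimitCocone F⟩⟩⟩ }

end Colimits

section Filtered

variable {J : Type} [SmallCategory J] [IsFiltered J] (F : J ⥤ SuppSet A)

lemma exists_ι_eq_and_supp_subset (q : colimit (F ⋙ Forget A)) :
    ∃ (j : J) (y : (F.obj j).carrier),
      colimit.ι (F ⋙ Forget A) j y = q ∧ (F.obj j).supp y ⊆ colimitSupp F q := by
  obtain ⟨j₀, y₀, hy₀⟩ := Types.jointly_surjective' q
  -- A representative of least support size meets any other one at a stage where its support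
  -- can only shrink, hence stays equal, so it lies in the other's support.
  obtain ⟨⟨j, y⟩, hy, hmin⟩ :=
    (measure fun p : Σ j, (F.obj j).carrier => ((F.obj p.1).supp p.2).ncard).wf.has_min
      {p | colimit.ι (F ⋙ Forget A) p.1 p.2 = q} ⟨⟨j₀, y₀⟩, hy₀⟩
  refine ⟨j, y, hy, ?_⟩
  rintro a ha _ ⟨j', rfl⟩ _ ⟨y', rfl⟩ _ ⟨hy', rfl⟩
  obtain ⟨k, u, v, huv⟩ :=
    (Types.FilteredColimit.colimit_eq_iff (F ⋙ Forget A)).1 (hy.trans hy'.symm)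
  have huv : (F.map u).1 y = (F.map v).1 y' := huv
  have hsupp : (F.obj k).supp ((F.map u).1 y) = (F.obj j).supp y :=
    Set.eq_of_subset_of_ncard_le ((F.map u).2 y)
      (not_lt.1 (hmin ⟨k, _⟩ ((ι_map_apply F u y).trans hy))) ((F.obj j).finite y)
  exact (F.map v).2 y' (huv ▸ hsupp ▸ ha)

attribute [local instance] Cardinal.fact_isRegular_aleph0

lemma preservesColimitsOfShape_coyoneda_of_finite (X : SuppSet A) [Finite X.carrier] :
    PreservesColimitsOfShape J (coyoneda.obj (Opposite.op X)) := by
  have hX := hasCardinalLT_of_finite X.carrier Cardinal.aleph0 le_rfl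
  have := hX.isCardinalPresentable
  have : IsCardinalFiltered J Cardinal.aleph0 := (isCardinalFiltered_aleph0_iff J).2 inferInstance
  refine ⟨fun {F} => preservesColimit_of_preserves_colimit_cocone (isColimitColimitCocone F) ?_⟩
  refine Types.FilteredColimit.isColimitOf' _ _ (fun f => ?_) (fun j g h hgh => ?_)
  · choose i y hy hsupp using fun x => exists_ι_eq_and_supp_subset F (f.1 x)
    refine ⟨IsCardinalFiltered.max i hX,
      ⟨fun x => (F.map (IsCardinalFiltered.toMax i hX x)).1 (y x),
        fun x => ((F.map _).2 _).trans ((hsupp x).trans (f.2 x))⟩,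
      Subtype.ext (funext fun x => ((ι_map_apply F _ (y x)).trans (hy x)).symm)⟩
  · obtain ⟨k, u, huv⟩ := (Types.FilteredColimit.isColimit_eq_iff'
      (isColimitOfPreserves (coyoneda.obj (Opposite.op X.carrier))
        (colimit.isColimit (F ⋙ Forget A))) ((Forget A).map g) ((Forget A).map h)).1
      (congrArg (Forget A).map hgh)
    exact ⟨k, u, Subtype.ext (funext (ConcreteCategory.congr_hom huv))⟩

end Filtered

section FiniteSubsets

variable (X : SuppSet A)

abbrev restrict (s : Set X.carrier) : SuppSet A :=
  ⟨s, fun x => X.supp x, fun x => X.finite x⟩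

def finsetDiagram : Finset X.carrier ⥤ SuppSet A where
  obj s := X.restrict s
  map f := ⟨fun x => ⟨x.1, f.le x.2⟩, fun _ => subset_rfl⟩

def finsetCocone : Cocone X.finsetDiagram where
  pt := X
  ι.app _ := ⟨Subtype.val, fun _ => subset_rfl⟩

def isColimitFinsetCocone : IsColimit X.finsetCocone where
  desc c := ⟨fun x => (c.ι.app {x}).1 ⟨x, Finset.mem_singleton_self x⟩,
    fun x => (c.ι.app {x}).2 ⟨x, Finset.mem_singleton_self x⟩⟩
  fac c s := Subtype.ext (funext fun (y : (s : Set X.carrier)) =>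
    (congrFun (congrArg Subtype.val (c.w (homOfLE (Finset.singleton_subset_iff.2 y.2))))
      ⟨y.1, Finset.mem_singleton_self _⟩).symm)
  uniq _ _ hm := Subtype.ext (funext fun x =>
    congrFun (congrArg Subtype.val (hm {x})) ⟨x, Finset.mem_singleton_self x⟩)

lemma finite_of_finitelyPresentable (hX : FinitelyPresentable X) : Finite X.carrier := by
  obtain ⟨_⟩ := hX (Finset X.carrier) inferInstance inferInstance
  obtain ⟨s, g, hg⟩ := Types.jointly_surjective_of_isColimit
    (isColimitOfPreserves (coyoneda.obj (Opposite.op X)) X.isColimitFinsetCocone) (𝟙 X)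
  have hval : ∀ x, (g.1 x).1 = x := congrFun (congrArg Subtype.val hg)
  exact Finite.of_injective (β := (s : Set X.carrier)) g.1 (Function.LeftInverse.injective hval)

end FiniteSubsets

lemma finitelyPresentable_iff_finite {X : SuppSet A} :
    FinitelyPresentable X ↔ Finite X.carrier :=
  ⟨X.finite_of_finitelyPresentable,
    fun _ _ _ _ => ⟨preservesColimitsOfShape_coyoneda_of_finite X⟩⟩

end SuppSet

/-- `Supp(A)` is locally finitely presentable: it is cocomplete, the
finitely presentable objects are exactly the finite supported sets, and every object
is a directed colimit of finitely presentable objects. -/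
theorem suppSet_lfp (A : Type) :
    HasColimits (SuppSet A) ∧
    (∀ X : SuppSet A, FinitelyPresentable X ↔ Finite X.carrier) ∧
    (∀ X : SuppSet A, ∃ (J : Type) (_ : SmallCategory J) (_ : IsFiltered J)
        (D : J ⥤ SuppSet A) (c : Cocone D),
      (∀ j, FinitelyPresentable (D.obj j)) ∧ c.pt = X ∧ Nonempty (IsColimit c)) := by
  refine ⟨inferInstance, fun X => SuppSet.finitelyPresentable_iff_finite, fun X => ?_⟩
  have hfp (s : Finset X.carrier) : FinitelyPresentable (X.finsetDiagram.obj s) :=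
    SuppSet.finitelyPresentable_iff_finite.2 (inferInstanceAs (Finite (s : Set X.carrier)))
  exact ⟨Finset X.carrier, inferInstance, inferInstance, X.finsetDiagram, X.finsetCocone,
    hfp, rfl, ⟨X.isColimitFinsetCocone⟩⟩
end
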